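/- For z > 0, K_2(z) = (1/2)∫_0^∞ t · exp(−(z/2)(t + 1/t)) dt satisfies K_2(z) ≤ √(π/(2z)) e^{−z} (1 + 15/(8z) + 105/(128 z²)). -/

import Mathlib

open Real

noncomputable def besselK (ν z x : ℝ) : ℝ :=
  (1 / 2) * ∫ t in Set.Ioi x, t ^ (ν - 1) * Real.exp (-(z / 2) * (t + 1 / t))

/-!
Substitute `t = exp (2 * a)` with `a = arsinh (u / 2)`, `u ∈ ℝ`. Then
`t + 1 / t = 2 cosh 2a = u² + 2` and `dt = exp (2 * a) / cosh a du`, so that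
`K₂(z) = e^{-z} / 2 * ∫ exp (4 * a) / cosh a * exp (-(z / 2) u²) du`.
Since `a` is odd in `u`, the integral only sees the even part `cosh 4a / cosh a` of the weight,
which lies below its second-order Taylor polynomial `1 + 15 u² / 8 + 35 u⁴ / 128` in `u²`;
the Gaussian moments of that polynomial give the bound.
-/

open MeasureTheory Set

lemma integrable_pow_mul_exp_neg_mul_sq {b : ℝ} (hb : 0 < b) (n : ℕ) :
    Integrable fun x : ℝ => x ^ n * exp (-b * x ^ 2) := by
  simpa using integrable_rpow_mul_exp_neg_mul_sq hb (s := n)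
    (neg_one_lt_zero.trans_le n.cast_nonneg)

lemma integral_even_pow_mul_exp_neg_mul_sq {b : ℝ} (hb : 0 < b) (n : ℕ) :
    ∫ x : ℝ, x ^ (2 * n) * exp (-b * x ^ 2) = Gamma (n + 1 / 2) / (√b * b ^ n) := by
  have half := integral_rpow_mul_exp_neg_mul_rpow two_pos
    (neg_one_lt_zero.trans_le (2 * n).cast_nonneg) hb
  simp only [rpow_natCast, rpow_two] at half
  have hexp : -((2 * n : ℕ) + 1 : ℝ) / 2 = -(n + 1 / 2) := by push_cast; ring
  have hgam : ((2 * n : ℕ) + 1 : ℝ) / 2 = n + 1 / 2 := by push_cast; ring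
  have hpow : b ^ (-(n + 1 / 2 : ℝ)) = (√b * b ^ n)⁻¹ := by
    rw [rpow_neg hb.le, add_comm, rpow_add hb, rpow_natCast, ← sqrt_eq_rpow]
  calc ∫ x : ℝ, x ^ (2 * n) * exp (-b * x ^ 2)
      = ∫ x : ℝ, |x| ^ (2 * n) * exp (-b * |x| ^ 2) := by
        simp only [(even_two_mul n).pow_abs, sq_abs]
    _ = 2 * ∫ x in Ioi (0 : ℝ), x ^ (2 * n) * exp (-b * x ^ 2) :=
        integral_comp_abs (f := fun x => x ^ (2 * n) * exp (-b * x ^ 2))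
    _ = _ := by rw [half, hexp, hgam, hpow]; ring

lemma Gamma_three_halves : Gamma (3 / 2) = √π / 2 := by
  rw [show (3 / 2 : ℝ) = 1 / 2 + 1 by norm_num, Gamma_add_one (by norm_num), Gamma_one_half_eq]
  ring

lemma Gamma_five_halves : Gamma (5 / 2) = 3 * √π / 4 := by
  rw [show (5 / 2 : ℝ) = 3 / 2 + 1 by norm_num, Gamma_add_one (by norm_num), Gamma_three_halves]
  ring

lemma integral_sq_mul_exp_neg_mul_sq {b : ℝ} (hb : 0 < b) :
    ∫ x : ℝ, x ^ 2 * exp (-b * x ^ 2) = √(π / b) / (2 * b) := by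
  have h := integral_even_pow_mul_exp_neg_mul_sq hb 1
  norm_num only [Gamma_three_halves] at h
  rw [h, sqrt_div' _ hb.le]
  field_simp

lemma integral_pow_four_mul_exp_neg_mul_sq {b : ℝ} (hb : 0 < b) :
    ∫ x : ℝ, x ^ 4 * exp (-b * x ^ 2) = 3 * √(π / b) / (4 * b ^ 2) := by
  have h := integral_even_pow_mul_exp_neg_mul_sq hb 2
  norm_num only [Gamma_five_halves] at h
  rw [h, sqrt_div' _ hb.le]
  field_simp

lemma integrable_even_quartic_mul_exp_neg_mul_sq {b : ℝ} (hb : 0 < b) (c₀ c₁ c₂ : ℝ) :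
    Integrable fun x : ℝ => (c₀ + c₁ * x ^ 2 + c₂ * x ^ 4) * exp (-b * x ^ 2) := by
  simp only [add_mul, mul_assoc]
  exact (((integrable_exp_neg_mul_sq hb).const_mul c₀).add
    ((integrable_pow_mul_exp_neg_mul_sq hb 2).const_mul c₁)).add
    ((integrable_pow_mul_exp_neg_mul_sq hb 4).const_mul c₂)

lemma integral_even_quartic_mul_exp_neg_mul_sq {b : ℝ} (hb : 0 < b) (c₀ c₁ c₂ : ℝ) :
    ∫ x : ℝ, (c₀ + c₁ * x ^ 2 + c₂ * x ^ 4) * exp (-b * x ^ 2) =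
      √(π / b) * (c₀ + c₁ / (2 * b) + 3 * c₂ / (4 * b ^ 2)) := by
  have h₀ : Integrable fun x : ℝ => c₀ * exp (-b * x ^ 2) :=
    (integrable_exp_neg_mul_sq hb).const_mul c₀
  have h₂ : Integrable fun x : ℝ => c₁ * (x ^ 2 * exp (-b * x ^ 2)) :=
    (integrable_pow_mul_exp_neg_mul_sq hb 2).const_mul c₁
  have h₄ : Integrable fun x : ℝ => c₂ * (x ^ 4 * exp (-b * x ^ 2)) :=
    (integrable_pow_mul_exp_neg_mul_sq hb 4).const_mul c₂
  have h₀₂ : Integrable fun x : ℝ =>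
      c₀ * exp (-b * x ^ 2) + c₁ * (x ^ 2 * exp (-b * x ^ 2)) := h₀.add h₂
  simp only [add_mul, mul_assoc]
  rw [integral_add h₀₂ h₄, integral_add h₀ h₂, integral_const_mul, integral_const_mul,
    integral_const_mul, integral_gaussian, integral_sq_mul_exp_neg_mul_sq hb,
    integral_pow_four_mul_exp_neg_mul_sq hb]
  ring

lemma integral_le_of_add_comp_neg_le {f g : ℝ → ℝ} (hf₀ : ∀ x, 0 ≤ f x)
    (hf : AEStronglyMeasurable f) (hg : Integrable g) (hfg : ∀ x, f x + f (-x) ≤ 2 * g x) :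
    ∫ x, f x ≤ ∫ x, g x := by
  have hfi : Integrable f := by
    refine (hg.const_mul 2).mono' hf (Filter.Eventually.of_forall fun x => ?_)
    rw [norm_of_nonneg (hf₀ x)]
    linarith [hfg x, hf₀ (-x)]
  have hfi' : Integrable fun x => f (-x) := hfi.comp_neg
  have := integral_mono (f := fun x => f x + f (-x)) (hfi.add hfi') (hg.const_mul 2) hfg
  rw [integral_add hfi hfi', integral_neg_eq_self, integral_const_mul] at this
  linarith

lemma cosh_four_mul_le (a : ℝ) :
    cosh (4 * a) ≤ (1 + 15 / 2 * sinh a ^ 2 + 35 / 8 * sinh a ^ 4) * cosh a := by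
  have hcosh4 : cosh (4 * a) = 1 + 8 * sinh a ^ 2 + 8 * sinh a ^ 4 := by
    rw [show 4 * a = 2 * (2 * a) by ring, cosh_two_mul, cosh_sq, sinh_two_mul]
    linear_combination 8 * sinh a ^ 2 * cosh_sq a
  have hsq : (1 + 8 * sinh a ^ 2 + 8 * sinh a ^ 4) ^ 2 ≤
      ((1 + 15 / 2 * sinh a ^ 2 + 35 / 8 * sinh a ^ 4) * cosh a) ^ 2 := by
    have hrem : 0 ≤ sinh a ^ 6 * (21 / 8 + 1329 / 64 * sinh a ^ 2 + 1225 / 64 * sinh a ^ 4) := by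
      positivity
    rw [mul_pow, cosh_sq]
    linear_combination hrem
  rw [hcosh4]
  exact (pow_le_pow_iff_left₀ (by positivity) (by have := cosh_pos a; positivity)
    two_ne_zero).mp hsq

lemma image_exp_two_mul_arsinh_half :
    (fun u => exp (2 * arsinh (u / 2))) '' univ = Ioi 0 := by
  refine Subset.antisymm (by rintro _ ⟨u, -, rfl⟩; exact exp_pos _) fun t (ht : 0 < t) => ?_
  refine ⟨2 * sinh (log t / 2), mem_univ _, ?_⟩
  dsimp only
  rw [mul_div_cancel_left₀ _ two_ne_zero, arsinh_sinh, mul_div_cancel₀ _ two_ne_zero,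
    exp_log ht]

lemma strictMono_exp_two_mul_arsinh_half : StrictMono fun u => exp (2 * arsinh (u / 2)) :=
  exp_strictMono.comp <| (strictMono_mul_left_of_pos two_pos).comp <|
    arsinh_strictMono.comp (strictMono_div_right_of_pos two_pos)

lemma hasDerivAt_exp_two_mul_arsinh_half (u : ℝ) :
    HasDerivAt (fun u => exp (2 * arsinh (u / 2)))
      (exp (2 * arsinh (u / 2)) / cosh (arsinh (u / 2))) u := by
  have := (((hasDerivAt_arsinh (u / 2)).comp u ((hasDerivAt_id u).div_const 2)).const_mul 2).exp
  refine this.congr_deriv ?_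
  simp only [Function.comp_apply, id, cosh_arsinh]
  field_simp

lemma exp_add_exp_neg (x : ℝ) : exp x + exp (-x) = 2 * cosh x := by
  rw [cosh_eq]; ring

lemma exp_two_mul_arsinh_half_add_inv (u : ℝ) :
    exp (2 * arsinh (u / 2)) + 1 / exp (2 * arsinh (u / 2)) = u ^ 2 + 2 := by
  rw [one_div, ← exp_neg, exp_add_exp_neg, cosh_two_mul, cosh_sq, sinh_arsinh]
  ring

lemma integral_Ioi_eq_integral_exp_two_mul_arsinh_half (g : ℝ → ℝ) :
    ∫ t in Ioi 0, g t =
      ∫ u, exp (2 * arsinh (u / 2)) / cosh (arsinh (u / 2)) * g (exp (2 * arsinh (u / 2))) := by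
  rw [← image_exp_two_mul_arsinh_half,
    integral_image_eq_integral_abs_deriv_smul MeasurableSet.univ
      (fun u _ => (hasDerivAt_exp_two_mul_arsinh_half u).hasDerivWithinAt)
      strictMono_exp_two_mul_arsinh_half.injective.injOn, setIntegral_univ]
  simp only [smul_eq_mul, abs_of_pos (div_pos (exp_pos _) (cosh_pos _))]

lemma exp_four_mul_arsinh_half_div_cosh_add_neg_le (u : ℝ) :
    exp (4 * arsinh (u / 2)) / cosh (arsinh (u / 2)) +
      exp (4 * arsinh (-u / 2)) / cosh (arsinh (-u / 2)) ≤
      2 * (1 + 15 / 8 * u ^ 2 + 35 / 128 * u ^ 4) := by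
  rw [neg_div, arsinh_neg, cosh_neg, ← add_div, mul_neg, exp_add_exp_neg,
    div_le_iff₀ (cosh_pos _)]
  have := cosh_four_mul_le (arsinh (u / 2))
  rw [sinh_arsinh] at this
  linarith

lemma besselK_two_eq_integral (z : ℝ) :
    besselK 2 z 0 = exp (-z) / 2 *
      ∫ u, exp (4 * arsinh (u / 2)) / cosh (arsinh (u / 2)) * exp (-(z / 2) * u ^ 2) := by
  have hK : besselK 2 z 0 = 1 / 2 * ∫ t in Ioi 0, t * exp (-(z / 2) * (t + 1 / t)) := by
    unfold besselK
    norm_num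
  rw [hK, integral_Ioi_eq_integral_exp_two_mul_arsinh_half, ← integral_const_mul,
    ← integral_const_mul]
  congr 1 with u
  have h4 : 4 * arsinh (u / 2) = 2 * arsinh (u / 2) + 2 * arsinh (u / 2) := by ring
  have hz : -(z / 2) * (u ^ 2 + 2) = -z + -(z / 2) * u ^ 2 := by ring
  rw [exp_two_mul_arsinh_half_add_inv, h4, hz, exp_add, exp_add]
  ring

lemma integral_exp_four_mul_arsinh_half_div_cosh_mul_le {b : ℝ} (hb : 0 < b) :
    ∫ u, exp (4 * arsinh (u / 2)) / cosh (arsinh (u / 2)) * exp (-b * u ^ 2) ≤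
      √(π / b) * (1 + 15 / (16 * b) + 105 / (512 * b ^ 2)) := by
  have hf₀ (u : ℝ) :
      0 ≤ exp (4 * arsinh (u / 2)) / cosh (arsinh (u / 2)) * exp (-b * u ^ 2) := by
    have := cosh_pos (arsinh (u / 2))
    positivity
  have hf : Continuous fun u : ℝ =>
      exp (4 * arsinh (u / 2)) / cosh (arsinh (u / 2)) * exp (-b * u ^ 2) := by
    have : Continuous fun u : ℝ => arsinh (u / 2) :=
      continuous_arsinh.comp (continuous_id.div_const 2)
    fun_prop (disch := exact fun _ => (cosh_pos _).ne')
  have hfg (u : ℝ) :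
      exp (4 * arsinh (u / 2)) / cosh (arsinh (u / 2)) * exp (-b * u ^ 2) +
        exp (4 * arsinh (-u / 2)) / cosh (arsinh (-u / 2)) * exp (-b * (-u) ^ 2) ≤
        2 * ((1 + 15 / 8 * u ^ 2 + 35 / 128 * u ^ 4) * exp (-b * u ^ 2)) := by
    rw [neg_sq, ← add_mul, ← mul_assoc]
    exact mul_le_mul_of_nonneg_right (exp_four_mul_arsinh_half_div_cosh_add_neg_le u)
      (exp_pos _).le
  calc _ ≤ ∫ u, (1 + 15 / 8 * u ^ 2 + 35 / 128 * u ^ 4) * exp (-b * u ^ 2) :=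
        integral_le_of_add_comp_neg_le hf₀ hf.aestronglyMeasurable
          (integrable_even_quartic_mul_exp_neg_mul_sq hb 1 (15 / 8) (35 / 128)) hfg
    _ = _ := by
      rw [integral_even_quartic_mul_exp_neg_mul_sq hb]
      field_simp
      ring

theorem besselK_two_bound (z : ℝ) (hz : 0 < z) :
    besselK 2 z 0 ≤ Real.sqrt (π / (2 * z)) * Real.exp (-z) *
      (1 + 15 / (8 * z) + 105 / (128 * z ^ 2)) := by
  have hsqrt : √(π / (z / 2)) = 2 * √(π / (2 * z)) := by
    rw [show π / (z / 2) = 2 ^ 2 * (π / (2 * z)) by field_simp, sqrt_mul (by positivity),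
      sqrt_sq zero_le_two]
  calc besselK 2 z 0
      = exp (-z) / 2 *
          ∫ u, exp (4 * arsinh (u / 2)) / cosh (arsinh (u / 2)) * exp (-(z / 2) * u ^ 2) :=
        besselK_two_eq_integral z
    _ ≤ exp (-z) / 2 *
          (√(π / (z / 2)) * (1 + 15 / (16 * (z / 2)) + 105 / (512 * (z / 2) ^ 2))) := by
        gcongr
        exact integral_exp_four_mul_arsinh_half_div_cosh_mul_le (half_pos hz)
    _ = _ := by
      rw [hsqrt]
      field_simp
      ring
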